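/- Sobolev inequality for functions vanishing on half the box (key step in the proof of Theorem 2.7): Let d ≥ 2 and p* = d/(d−1). There exists a constant C < ∞, depending only on d, such that for every positive integer r and every function g : B_r → [0,∞) satisfying |{x ∈ B_r : g(x) = 0}| ≥ |B_r|/2, one has ‖g‖_{L^{p*}(B_r)} ≤ C ‖∇g‖_{L^1(𝔹_r)}. -/

import Mathlib

open scoped ENNReal NNReal
open Set MeasureTheory

noncomputable section

namespace AnchoredNash

/-- Vertices of `ℤ^d`. -/
abbrev Zd (d : ℕ) : Type := Fin d → ℤ

/-- Nearest-neighbour edges of `ℤ^d`, encoded as a base point together with a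
direction: the pair `(x, i)` stands for the edge `{x, x + eᵢ}`. -/
abbrev Edge (d : ℕ) : Type := (Fin d → ℤ) × Fin d

/-- The second endpoint `x + eᵢ` of the edge `(x, i)`. -/
def eplus {d : ℕ} (e : Edge d) : Zd d := e.1 + Pi.single e.2 1

/-- Euclidean norm on `ℤ^d`. -/
def eucNorm {d : ℕ} (x : Zd d) : ℝ := Real.sqrt (∑ i, ((x i : ℝ)) ^ 2)

/-- `|x|_* = max (|x|, 1)`. -/
def xstar {d : ℕ} (x : Zd d) : ℝ := max (eucNorm x) 1

/-- The box `B_r = {-r, …, r}^d`. -/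
def box (d r : ℕ) : Finset (Zd d) := Fintype.piFinset fun _ => Finset.Icc (-(r : ℤ)) (r : ℤ)

/-- The set `𝔹_r` of edges with both endpoints in `B_r`. -/
def edgeBox (d r : ℕ) : Finset (Edge d) :=
  (box d r ×ˢ (Finset.univ : Finset (Fin d))).filter fun e => eplus e ∈ box d r

/-- Squared gradient `|∇f|(e)²` of `f` along the edge `e`, valued in `ℝ≥0∞`. -/
def grad2 {d : ℕ} (f : Zd d → ℝ) (e : Edge d) : ℝ≥0∞ :=
  (‖f (eplus e) - f e.1‖₊ : ℝ≥0∞) ^ 2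

/-- `‖f‖₂`, valued in `ℝ≥0∞`. -/
def l2 {d : ℕ} (f : Zd d → ℝ) : ℝ≥0∞ := (∑' x, (‖f x‖₊ : ℝ≥0∞) ^ 2) ^ (1/2 : ℝ)

/-- `‖f‖₁`, valued in `ℝ≥0∞`. -/
def l1 {d : ℕ} (f : Zd d → ℝ) : ℝ≥0∞ := ∑' x, (‖f x‖₊ : ℝ≥0∞)

/-- `‖w ∇f‖₂`, valued in `ℝ≥0∞`. -/
def wGradNorm {d : ℕ} (w : Edge d → ℝ≥0) (f : Zd d → ℝ) : ℝ≥0∞ :=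
  (∑' e, (w e : ℝ≥0∞) ^ 2 * grad2 f e) ^ (1/2 : ℝ)

/-- `‖ |x|_*^{p/2} f ‖₂`, valued in `ℝ≥0∞`. -/
def wl2 {d : ℕ} (p : ℝ) (f : Zd d → ℝ) : ℝ≥0∞ :=
  (∑' x, ENNReal.ofReal (xstar x ^ p) * (‖f x‖₊ : ℝ≥0∞) ^ 2) ^ (1/2 : ℝ)

/-- The anchored maximal function
`M_q(w) = (sup_{r ≥ 1} |𝔹_r|⁻¹ ∑_{e ∈ 𝔹_r} w(e)^{-q})^{1/q}`, with the convention
`0 ^ (-q) = ∞` (automatic in `ℝ≥0∞`). -/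
def Mq (d : ℕ) (q : ℝ) (w : Edge d → ℝ≥0) : ℝ≥0∞ :=
  (⨆ (r : ℕ) (_ : 1 ≤ r),
    ((edgeBox d r).card : ℝ≥0∞)⁻¹ * ∑ e ∈ edgeBox d r, (w e : ℝ≥0∞) ^ (-q)) ^ (1/q)

/-- The critical exponent `θ_c`, defined by
`1/θ_c = 1 + ((dp+2p)/(dp+2d)) (q/d - 1)`. -/
def θcrit (d : ℕ) (p q : ℝ) : ℝ :=
  1 / (1 + (((d : ℝ) * p + 2 * p) / ((d : ℝ) * p + 2 * (d : ℝ))) * (q / (d : ℝ) - 1))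

/-- `L^s` norm of `f` on the box `B_r`. -/
def boxLp (d r : ℕ) (s : ℝ) (f : Zd d → ℝ) : ℝ := (∑ x ∈ box d r, |f x| ^ s) ^ (1/s)

/-- `L^∞` norm of `f` on the box `B_r`. -/
def boxLinf (d r : ℕ) (f : Zd d → ℝ) : ℝ := sSup ((fun x => |f x|) '' (box d r : Set (Zd d)))

/-- `L^s` norm of `∇f` on the edge set `𝔹_r`. -/
def gradLp (d r : ℕ) (s : ℝ) (f : Zd d → ℝ) : ℝ :=
  (∑ e ∈ edgeBox d r, |f (eplus e) - f e.1| ^ s) ^ (1/s)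

/-- Average of `f` over the box `B_r`. -/
def avg (d r : ℕ) (f : Zd d → ℝ) : ℝ := (∑ x ∈ box d r, f x) / ((box d r).card : ℝ)

/-- Generator of the random walk among the conductances `a`:
`(gen a f) y = ∑_{z ∼ y} a({y,z}) (f z - f y)`. -/
def gen {d : ℕ} (a : Edge d → ℝ) (f : Zd d → ℝ) (y : Zd d) : ℝ :=
  ∑ i : Fin d,
    (a (y, i) * (f (y + Pi.single i 1) - f y) +
      a (y - Pi.single i 1, i) * (f (y - Pi.single i 1) - f y))

/-- `hk` is the heat kernel of the static environment `a`: the (unique) bounded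
solution of `∂_t p_t(x,y) = ∑_{z ∼ y} a({y,z})(p_t(x,z) - p_t(x,y))`, `p_0(x,y) = 1_{x=y}`,
together with its standard properties (nonnegativity, total mass one, symmetry). -/
structure IsHeatKernel (d : ℕ) (a : Edge d → ℝ) (hk : ℝ → Zd d → Zd d → ℝ) : Prop where
  bounded : ∀ t, ∃ M, ∀ x y, |hk t x y| ≤ M
  init : ∀ x y, hk 0 x y = if x = y then (1 : ℝ) else 0
  ode : ∀ x y, ∀ t ∈ Ici (0 : ℝ),
    HasDerivWithinAt (fun s => hk s x y) (gen a (fun z => hk t x z) y) (Ici (0 : ℝ)) t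
  nonneg : ∀ t x y, 0 ≤ t → 0 ≤ hk t x y
  mass : ∀ t x, 0 ≤ t → HasSum (fun y => hk t x y) 1
  symm : ∀ t x y, 0 ≤ t → hk t x y = hk t y x

/-- The Dirichlet energy `∑_e a(e) |∇u|(e)²`, valued in `ℝ≥0∞`. -/
def dirichlet {d : ℕ} (a : Edge d → ℝ) (u : Zd d → ℝ) : ℝ≥0∞ :=
  ∑' e, ENNReal.ofReal (a e) * grad2 u e

/-- The static environment `a` (with heat kernel `hk`) is `w`-moderate:
`‖w ∇u_t‖₂² ≤ D_t` for all `t ≥ 0`, where `u_t = p_t(0, ·)`. -/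
def StaticModerate (d : ℕ) (a : Edge d → ℝ) (w : Edge d → ℝ≥0)
    (hk : ℝ → Zd d → Zd d → ℝ) : Prop :=
  ∀ t, 0 ≤ t →
    ∑' e, (w e : ℝ≥0∞) ^ 2 * grad2 (fun z => hk t 0 z) e ≤ dirichlet a fun z => hk t 0 z

/-- Piecewise continuity: continuity away from a countable set. -/
def PiecewiseCts (g : ℝ → ℝ) : Prop :=
  ∃ D : Set ℝ, D.Countable ∧ ∀ t ∉ D, ContinuousAt g t

/-- A dynamic environment: for each edge, a piecewise continuous `[0,1]`-valued
function of time. -/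
def IsDynEnv (d : ℕ) (a : ℝ → Edge d → ℝ) : Prop :=
  (∀ t e, a t e ∈ Icc (0 : ℝ) 1) ∧ ∀ e, PiecewiseCts fun t => a t e

/-- `hk` is the heat kernel of the dynamic environment `a`: the (unique) bounded
solution of `∂_t p_{s,t}(x,y) = ∑_{z ∼ y} a_t({y,z})(p_{s,t}(x,z) - p_{s,t}(x,y))` with
`p_{s,s}(x,y) = 1_{x=y}` (stated in integral form), together with its standard
properties (nonnegativity, total mass one). -/
structure IsDynKernel (d : ℕ) (a : ℝ → Edge d → ℝ) (hk : ℝ → ℝ → Zd d → Zd d → ℝ) :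
    Prop where
  bounded : ∀ s t, ∃ M, ∀ x y, |hk s t x y| ≤ M
  eqn : ∀ s x y t, s ≤ t →
    hk s t x y = (if x = y then (1:ℝ) else 0) + ∫ τ in s..t, gen (a τ) (fun z => hk s τ x z) y
  nonneg : ∀ s t x y, s ≤ t → 0 ≤ hk s t x y
  mass : ∀ s t x, s ≤ t → HasSum (fun y => hk s t x y) 1

/-- The Dirichlet energy `D_t = ∑_e a_t(e) |∇u_t|(e)²` of `u_t = p_{0,t}(0,·)`. -/
def dynD (d : ℕ) (a : ℝ → Edge d → ℝ) (hk : ℝ → ℝ → Zd d → Zd d → ℝ) (t : ℝ) : ℝ≥0∞ :=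
  ∑' e : Edge d, ENNReal.ofReal (a t e) * grad2 (fun z => hk 0 t 0 z) e

/-- The dynamic environment `a` (with heat kernel `hk`) is `(w,K)`-moderate:
`‖w_t ∇u_t‖₂² ≤ D̄_t = ∫_t^∞ K_{s-t} D_s ds` for all `t ≥ 0`. -/
def DynModerate (d : ℕ) (a : ℝ → Edge d → ℝ) (K : ℝ → ℝ) (w : ℝ → Edge d → ℝ≥0)
    (hk : ℝ → ℝ → Zd d → Zd d → ℝ) : Prop :=
  ∀ t, 0 ≤ t →
    ∑' e, (w t e : ℝ≥0∞) ^ 2 * grad2 (fun z => hk 0 t 0 z) e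
      ≤ ∫⁻ s in Ici t, ENNReal.ofReal (K (s - t)) * dynD d a hk s

/-- `C(K) = max (1, ‖K‖₁^{α/β} / ‖K‖_{L¹([0,1])}^{(1-α)/β})`. -/
def CK (α β : ℝ) (K : ℝ → ℝ) : ℝ≥0∞ :=
  max 1 ((∫⁻ s in Ici (0:ℝ), ENNReal.ofReal (K s)) ^ (α / β)
    / (∫⁻ s in Icc (0:ℝ) 1, ENNReal.ofReal (K s)) ^ ((1 - α) / β))

/-- The space-time maximal quantity `𝓜_q(w)`, defined through
`𝓜_q(w)⁻² = inf_{t ≥ 1} t⁻¹ ∫_0^t M_q(w_s)⁻² ds`. -/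
def MMq (d : ℕ) (q : ℝ) (w : ℝ → Edge d → ℝ≥0) : ℝ≥0∞ :=
  (⨅ (t : ℝ) (_ : 1 ≤ t),
    ENNReal.ofReal t⁻¹ * ∫⁻ s in Ioc (0:ℝ) t, Mq d q (w s) ^ (-2 : ℝ)) ^ (-(1/2) : ℝ)

/-- The standing hypotheses on `K : ℝ₊ → ℝ₊`: measurable, nonnegative, integrable,
with positive mass on `[0,1]`. -/
def GoodK (K : ℝ → ℝ) : Prop :=
  Measurable K ∧ (∀ s, 0 ≤ K s) ∧ IntegrableOn K (Ici (0:ℝ)) ∧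
    (∫⁻ s in Icc (0:ℝ) 1, ENNReal.ofReal (K s)) ≠ 0

/-- The standing hypotheses on the weights: a measurable family with values in `[0,1]`. -/
def GoodW (d : ℕ) (w : ℝ → Edge d → ℝ≥0) : Prop :=
  (∀ t e, w t e ≤ 1) ∧ ∀ e, Measurable fun t => w t e

end AnchoredNash


/-!
Along each coordinate line of the box, a set `A ⊆ B_r` either fills the line or has a boundary
edge on it. Feeding the weight "one per boundary edge plus `1 / (2r + 1)` per point of `A`", whose
sum over every such line through `A` is at least one, into the discrete Loomis–Whitney (grid-lines)
inequality gives `|A|^{(d-1)/d} ≤ |∂A| + |A| / (2r + 1)`. If `|A| ≤ |B_r| / 2` the last term is at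
most `2^{-1/d} |A|^{(d-1)/d}`, which is the relative isoperimetric inequality. The Sobolev
inequality follows from it by the layer-cake decomposition of `g` into indicators of its
superlevel sets, all of which occupy at most half of the box.
-/

open scoped Finset

theorem Int.iff_of_forall_iff_add_one {P : ℤ → Prop} {u v : ℤ} (huv : u ≤ v)
    (h : ∀ t, u ≤ t → t < v → (P t ↔ P (t + 1))) : P u ↔ P v := by
  induction v, huv using Int.leInduction with
  | base => rfl
  | succ v huv ih =>
    exact (ih fun t ht htv => h t ht (by omega)).trans (h v huv (by omega))

theorem tsum_prod_tsum_update_rpow_le {ι : Type*} [Fintype ι] [DecidableEq ι] {p : ℝ}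
    (hp : Real.HolderConjugate (Fintype.card ι) p) (f : (ι → ℤ) → ℝ≥0∞) :
    ∑' x, ∏ i, (∑' t, f (Function.update x i t)) ^ (1 / (Fintype.card ι - 1 : ℝ)) ≤
      (∑' x, f x) ^ p := by
  have hcount : Measure.pi (fun _ : ι => (Measure.count : Measure ℤ)) = Measure.count :=
    Measure.ext_of_singleton fun x => by simp
  simpa only [hcount, lintegral_count] using
    lintegral_prod_lintegral_pow_le (fun _ => Measure.count) hp (measurable_of_countable f)

lemma abs_sub_eq_abs_sub_add_mul_abs_sub {a b m χa χb : ℝ} (hm : 0 ≤ m)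
    (ha : χa = 0 ∧ a = 0 ∨ χa = 1 ∧ m ≤ a) (hb : χb = 0 ∧ b = 0 ∨ χb = 1 ∧ m ≤ b) :
    |b - a| = |(b - m * χb) - (a - m * χa)| + m * |χb - χa| := by
  rcases ha with ⟨rfl, rfl⟩ | ⟨rfl, ha⟩ <;> rcases hb with ⟨rfl, rfl⟩ | ⟨rfl, hb⟩
  · simp
  · rw [abs_of_nonneg (by linarith), abs_of_nonneg (by linarith)]; norm_num
  · rw [abs_of_nonpos (by linarith), abs_of_nonpos (by linarith)]; norm_num
  · norm_num

section Coarea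

open Finset

variable {V ε : Type*} [DecidableEq V]

def edgeBoundary (E : Finset ε) (src tgt : ε → V) (A : Finset V) : Finset ε :=
  E.filter fun e => ¬(src e ∈ A ↔ tgt e ∈ A)

lemma sum_abs_indicator_sub_eq_card_edgeBoundary (E : Finset ε) (src tgt : ε → V)
    (A : Finset V) :
    ∑ e ∈ E, |(if tgt e ∈ A then (1 : ℝ) else 0) - if src e ∈ A then 1 else 0| =
      #(edgeBoundary E src tgt A) := by
  rw [edgeBoundary, card_filter, Nat.cast_sum]
  refine sum_congr rfl fun e _ => ?_
  by_cases hs : src e ∈ A <;> by_cases ht : tgt e ∈ A <;> simp [hs, ht]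

lemma rpow_sum_abs_mul_indicator_rpow {s T : Finset V} (hT : T ⊆ s) {m p : ℝ} (hm : 0 ≤ m)
    (hp : 0 < p) :
    (∑ x ∈ s, |m * if x ∈ T then 1 else 0| ^ p) ^ (1 / p) = m * (#T : ℝ) ^ (1 / p) := by
  have hterm : ∀ x ∈ s, |m * if x ∈ T then 1 else 0| ^ p = if x ∈ T then m ^ p else 0 := by
    intro x _
    split_ifs <;> simp [abs_of_nonneg hm, Real.zero_rpow hp.ne']
  rw [sum_congr rfl hterm, sum_ite_mem, Finset.inter_eq_right.2 hT, sum_const, nsmul_eq_mul,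
    Real.mul_rpow (Nat.cast_nonneg _) (Real.rpow_nonneg hm _), ← Real.rpow_mul hm,
    mul_one_div_cancel hp.ne', Real.rpow_one, mul_comm]

/-- Peeling off the lowest positive level `m` of `g` splits `|∇g|` exactly into
`|∇(g - m 𝟙_{g ≠ 0})|` plus `m` times the boundary of the support, while Minkowski splits `‖g‖_p`
the same way; induct on the support. -/
theorem rpow_sum_abs_rpow_le_of_isoperimetric (E : Finset ε) (src tgt : ε → V) {p C : ℝ}
    (hp : 1 ≤ p) {s : Finset V} (hE : ∀ e ∈ E, src e ∈ s ∧ tgt e ∈ s) {S : Finset V}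
    (hiso : ∀ A ⊆ S, (#A : ℝ) ^ (1 / p) ≤ C * #(edgeBoundary E src tgt A))
    {g : V → ℝ} (hg : ∀ x ∈ s, 0 ≤ g x) (hgS : ∀ x ∈ s, g x ≠ 0 → x ∈ S) :
    (∑ x ∈ s, |g x| ^ p) ^ (1 / p) ≤ C * ∑ e ∈ E, |g (tgt e) - g (src e)| := by
  induction S using Finset.strongInduction generalizing g with
  | H S ih =>
  have hp0 : 0 < p := by linarith
  set T := s.filter (g · ≠ 0)
  have hTs : T ⊆ s := filter_subset _ s
  have hTS : T ⊆ S := fun x hx => hgS x (hTs hx) (mem_filter.1 hx).2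
  rcases T.eq_empty_or_nonempty with hT | hT
  · have hg0 : ∀ x ∈ s, g x = 0 := fun x hx => by_contra fun h =>
      eq_empty_iff_forall_notMem.1 hT x (mem_filter.2 ⟨hx, h⟩)
    rw [sum_eq_zero fun x hx => by simp [hg0 x hx, Real.zero_rpow hp0.ne'],
      sum_eq_zero fun e he => by simp [hg0 _ (hE e he).1, hg0 _ (hE e he).2],
      Real.zero_rpow (one_div_pos.2 hp0).ne', mul_zero]
  obtain ⟨x₀, hx₀, hmin⟩ := T.exists_min_image g hT
  set m := g x₀
  have hm : 0 ≤ m := hg x₀ (hTs hx₀)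
  set χ : V → ℝ := fun x => if x ∈ T then 1 else 0
  have hχ : ∀ x ∈ s, χ x = 0 ∧ g x = 0 ∨ χ x = 1 ∧ m ≤ g x := fun x hxs => by
    by_cases hx : x ∈ T
    · exact .inr ⟨if_pos hx, hmin x hx⟩
    · exact .inl ⟨if_neg hx, by_contra fun h => hx (mem_filter.2 ⟨hxs, h⟩)⟩
  set g' : V → ℝ := fun x => g x - m * χ x
  have hg' : ∀ x ∈ s, 0 ≤ g' x := fun x hx => by
    rcases hχ x hx with ⟨h, h'⟩ | ⟨h, h'⟩ <;> simp [g', h, h']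
  have hg'T : ∀ x ∈ s, g' x ≠ 0 → x ∈ T.erase x₀ := fun x hxs hx => by
    rcases hχ x hxs with ⟨h, h'⟩ | ⟨h, -⟩
    · simp [g', h, h'] at hx
    · refine mem_erase.2 ⟨?_, by_contra fun hxT => by simp [χ, hxT] at h⟩
      rintro rfl
      simp [g', h, m] at hx
  have hsub : T.erase x₀ ⊂ S := (erase_ssubset hx₀).trans_le hTS
  have hg'sob := ih _ hsub (fun A hA => hiso A (hA.trans hsub.subset)) hg' hg'T
  have hgrad : ∑ e ∈ E, |g (tgt e) - g (src e)| =
      ∑ e ∈ E, |g' (tgt e) - g' (src e)| + m * #(edgeBoundary E src tgt T) := by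
    rw [← sum_abs_indicator_sub_eq_card_edgeBoundary, mul_sum, ← sum_add_distrib]
    exact sum_congr rfl fun e he =>
      abs_sub_eq_abs_sub_add_mul_abs_sub hm (hχ _ (hE e he).1) (hχ _ (hE e he).2)
  calc (∑ x ∈ s, |g x| ^ p) ^ (1 / p)
      = (∑ x ∈ s, |g' x + m * χ x| ^ p) ^ (1 / p) := by simp only [g', sub_add_cancel]
    _ ≤ (∑ x ∈ s, |g' x| ^ p) ^ (1 / p) + (∑ x ∈ s, |m * χ x| ^ p) ^ (1 / p) :=
      Real.Lp_add_le s _ _ hp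
    _ = (∑ x ∈ s, |g' x| ^ p) ^ (1 / p) + m * (#T : ℝ) ^ (1 / p) := by
      rw [rpow_sum_abs_mul_indicator_rpow hTs hm hp0]
    _ ≤ C * ∑ e ∈ E, |g' (tgt e) - g' (src e)| + m * (C * #(edgeBoundary E src tgt T)) :=
      add_le_add hg'sob (mul_le_mul_of_nonneg_left (hiso T hTS) hm)
    _ = C * ∑ e ∈ E, |g (tgt e) - g (src e)| := by rw [hgrad]; ring

end Coarea

lemma div_le_rpow_mul_rpow_of_two_mul_le_pow {a n : ℝ} {d : ℕ} (hd : d ≠ 0) (ha : 0 ≤ a)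
    (hn : 0 < n) (h : 2 * a ≤ n ^ d) :
    a / n ≤ 2⁻¹ ^ (d : ℝ)⁻¹ * a ^ (((d : ℝ) - 1) / d) := by
  have hd' : (d : ℝ) ≠ 0 := Nat.cast_ne_zero.2 hd
  have hroot : a ^ (d : ℝ)⁻¹ ≤ n * 2⁻¹ ^ (d : ℝ)⁻¹ := by
    calc a ^ (d : ℝ)⁻¹ ≤ (n ^ d * 2⁻¹) ^ (d : ℝ)⁻¹ :=
          Real.rpow_le_rpow ha (by linarith) (by positivity)
      _ = n * 2⁻¹ ^ (d : ℝ)⁻¹ := by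
          rw [Real.mul_rpow (by positivity) (by norm_num), Real.pow_rpow_inv_natCast hn.le hd]
  have hexp : ((d : ℝ) - 1) / d + (d : ℝ)⁻¹ = 1 := by field_simp; ring
  rw [div_le_iff₀ hn]
  calc a = a ^ (((d : ℝ) - 1) / d) * a ^ (d : ℝ)⁻¹ := by
        rw [← Real.rpow_add' ha (by rw [hexp]; exact one_ne_zero), hexp, Real.rpow_one]
    _ ≤ a ^ (((d : ℝ) - 1) / d) * (n * 2⁻¹ ^ (d : ℝ)⁻¹) := by gcongr
    _ = 2⁻¹ ^ (d : ℝ)⁻¹ * a ^ (((d : ℝ) - 1) / d) * n := by ring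

namespace AnchoredNash

open Function

variable {d r : ℕ}

lemma card_Icc_neg_self : #(Finset.Icc (-(r : ℤ)) r) = 2 * r + 1 := by
  rw [Int.card_Icc]
  omega

lemma mem_box {x : Zd d} : x ∈ box d r ↔ ∀ i, x i ∈ Finset.Icc (-(r : ℤ)) r :=
  Fintype.mem_piFinset

lemma card_box : #(box d r) = (2 * r + 1) ^ d := by
  rw [box, Fintype.card_piFinset, Finset.prod_const, card_Icc_neg_self, Finset.card_univ,
    Fintype.card_fin]

lemma mem_edgeBox {e : Edge d} : e ∈ edgeBox d r ↔ e.1 ∈ box d r ∧ eplus e ∈ box d r := by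
  simp [edgeBox]

lemma eplus_update (x : Zd d) (i : Fin d) (t : ℤ) :
    eplus (update x i t, i) = update x i (t + 1) := by
  ext j
  rcases eq_or_ne j i with rfl | hj <;> simp [eplus, *]

lemma update_mem_box {x : Zd d} (hx : x ∈ box d r) {i : Fin d} {t : ℤ} :
    update x i t ∈ box d r ↔ t ∈ Finset.Icc (-(r : ℤ)) r := by
  refine ⟨fun h => by simpa using mem_box.1 h i, fun ht => mem_box.2 fun j => ?_⟩
  rcases eq_or_ne j i with rfl | hj
  · simpa using ht
  · simpa [hj] using mem_box.1 hx j

lemma update_mem_iff_of_forall_notMem_edgeBoundary {A : Finset (Zd d)} {x : Zd d}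
    (hx : x ∈ box d r) {i : Fin d}
    (h : ∀ t, (update x i t, i) ∉ edgeBoundary (edgeBox d r) Prod.fst eplus A) {a : ℤ}
    (ha : a ∈ Finset.Icc (-(r : ℤ)) r) : update x i a ∈ A ↔ update x i (-r) ∈ A := by
  rw [Finset.mem_Icc] at ha
  refine (Int.iff_of_forall_iff_add_one (P := fun t => update x i t ∈ A) ha.1
    fun t ht hta => ?_).symm
  by_contra hflip
  refine h t (Finset.mem_filter.2 ⟨mem_edgeBox.2 ?_, by rwa [eplus_update]⟩)
  rw [eplus_update, update_mem_box hx, update_mem_box hx, Finset.mem_Icc, Finset.mem_Icc]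
  omega

def isoWeight (d r : ℕ) (A : Finset (Zd d)) (y : Zd d) : ℝ≥0∞ :=
  ∑ e ∈ edgeBoundary (edgeBox d r) Prod.fst eplus A, (if y = e.1 then 1 else 0) +
    ∑ a ∈ A, if y = a then ((2 * r + 1 : ℕ) : ℝ≥0∞)⁻¹ else 0

lemma tsum_isoWeight (A : Finset (Zd d)) :
    ∑' y, isoWeight d r A y =
      #(edgeBoundary (edgeBox d r) Prod.fst eplus A) + #A / ((2 * r + 1 : ℕ) : ℝ≥0∞) := by
  simp only [isoWeight, ENNReal.tsum_add, Summable.tsum_finsetSum fun _ _ => ENNReal.summable,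
    tsum_ite_eq, Finset.sum_const, nsmul_eq_mul, mul_one, div_eq_mul_inv]

lemma one_le_tsum_isoWeight_update {A : Finset (Zd d)} (hA : A ⊆ box d r) {x : Zd d}
    (hx : x ∈ A) (i : Fin d) : 1 ≤ ∑' t, isoWeight d r A (update x i t) := by
  by_cases h : ∃ t, (update x i t, i) ∈ edgeBoundary (edgeBox d r) Prod.fst eplus A
  · obtain ⟨t, ht⟩ := h
    calc 1 ≤ isoWeight d r A (update x i t) :=
          le_add_right <| (if_pos rfl).symm.trans_le <|
            Finset.single_le_sum (f := fun e : Edge d => if update x i t = e.1 then 1 else 0)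
              (fun _ _ => zero_le) ht
      _ ≤ ∑' t, isoWeight d r A (update x i t) := ENNReal.le_tsum t
  push Not at h
  have hline : ∀ t ∈ Finset.Icc (-(r : ℤ)) r, update x i t ∈ A := fun t ht => by
    rw [update_mem_iff_of_forall_notMem_edgeBoundary (hA hx) h ht,
      ← update_mem_iff_of_forall_notMem_edgeBoundary (hA hx) h (mem_box.1 (hA hx) i)]
    simpa using hx
  calc (1 : ℝ≥0∞) = ∑ t ∈ Finset.Icc (-(r : ℤ)) r, ((2 * r + 1 : ℕ) : ℝ≥0∞)⁻¹ := by
        rw [Finset.sum_const, card_Icc_neg_self, nsmul_eq_mul,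
          ENNReal.mul_inv_cancel (Nat.cast_ne_zero.2 (by omega)) (ENNReal.natCast_ne_top _)]
    _ ≤ ∑ t ∈ Finset.Icc (-(r : ℤ)) r, isoWeight d r A (update x i t) :=
        Finset.sum_le_sum fun t ht => le_add_left <| (if_pos rfl).symm.trans_le <|
          Finset.single_le_sum
            (f := fun a => if update x i t = a then ((2 * r + 1 : ℕ) : ℝ≥0∞)⁻¹ else 0)
            (fun _ _ => zero_le) (hline t ht)
    _ ≤ ∑' t, isoWeight d r A (update x i t) := ENNReal.sum_le_tsum _

theorem card_le_rpow_card_edgeBoundary_add (hd : 2 ≤ d) {A : Finset (Zd d)}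
    (hA : A ⊆ box d r) :
    (#A : ℝ≥0∞) ≤ (#(edgeBoundary (edgeBox d r) Prod.fst eplus A) +
      #A / ((2 * r + 1 : ℕ) : ℝ≥0∞)) ^ ((d : ℝ) / (d - 1)) := by
  have hp : Real.HolderConjugate (Fintype.card (Fin d)) (d / (d - 1)) := by
    simpa [Real.conjExponent] using Real.HolderConjugate.conjExponent (p := d) (by norm_cast)
  calc (#A : ℝ≥0∞) = ∑ x ∈ A, 1 := by simp
    _ ≤ ∑ x ∈ A, ∏ i, (∑' t, isoWeight d r A (update x i t)) ^ (1 / (d - 1 : ℝ)) :=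
        Finset.sum_le_sum fun x hx => Finset.one_le_prod' fun i _ =>
          ENNReal.one_le_rpow (one_le_tsum_isoWeight_update hA hx i)
            (one_div_pos.2 (sub_pos.2 (by norm_cast)))
    _ ≤ ∑' x, ∏ i, (∑' t, isoWeight d r A (update x i t)) ^ (1 / (d - 1 : ℝ)) :=
        ENNReal.sum_le_tsum _
    _ ≤ (∑' x, isoWeight d r A x) ^ ((d : ℝ) / (d - 1)) := by
        simpa using tsum_prod_tsum_update_rpow_le hp (isoWeight d r A)
    _ = _ := by rw [tsum_isoWeight]

theorem card_rpow_le_card_edgeBoundary_add (hd : 2 ≤ d) {A : Finset (Zd d)}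
    (hA : A ⊆ box d r) :
    (#A : ℝ) ^ (((d : ℝ) - 1) / d) ≤
      #(edgeBoundary (edgeBox d r) Prod.fst eplus A) + #A / ((2 * r + 1 : ℕ) : ℝ) := by
  set y : ℝ := #(edgeBoundary (edgeBox d r) Prod.fst eplus A) + #A / ((2 * r + 1 : ℕ) : ℝ)
  have hy : 0 ≤ y := by positivity
  have hd1 : (0 : ℝ) < d - 1 := sub_pos.2 (by norm_cast)
  have hA_le : (#A : ℝ) ≤ y ^ ((d : ℝ) / (d - 1)) := by
    rw [← ENNReal.ofReal_le_ofReal_iff (by positivity),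
      ← ENNReal.ofReal_rpow_of_nonneg hy (by positivity), ENNReal.ofReal_add (by positivity)
        (by positivity), ENNReal.ofReal_div_of_pos (by positivity)]
    simpa only [ENNReal.ofReal_natCast] using card_le_rpow_card_edgeBoundary_add hd hA
  calc (#A : ℝ) ^ (((d : ℝ) - 1) / d) ≤ (y ^ ((d : ℝ) / (d - 1))) ^ (((d : ℝ) - 1) / d) :=
        Real.rpow_le_rpow (by positivity) hA_le (by positivity)
    _ = y := by
        rw [← Real.rpow_mul hy, div_mul_div_cancel₀ hd1.ne', div_self (by positivity),
          Real.rpow_one]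

theorem card_rpow_le_of_two_mul_card_le (hd : 2 ≤ d) {A : Finset (Zd d)} (hA : A ⊆ box d r)
    (hhalf : 2 * #A ≤ #(box d r)) :
    (#A : ℝ) ^ (((d : ℝ) - 1) / d) ≤
      (1 - 2⁻¹ ^ (d : ℝ)⁻¹)⁻¹ * #(edgeBoundary (edgeBox d r) Prod.fst eplus A) := by
  have hc : (2⁻¹ : ℝ) ^ (d : ℝ)⁻¹ < 1 :=
    Real.rpow_lt_one (by norm_num) (by norm_num) (by positivity)
  have hvol := div_le_rpow_mul_rpow_of_two_mul_le_pow (d := d) (by omega) (Nat.cast_nonneg #A)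
    (Nat.cast_pos.2 (Nat.succ_pos (2 * r))) (by exact_mod_cast card_box (d := d) ▸ hhalf)
  rw [inv_mul_eq_div, le_div_iff₀ (sub_pos.2 hc)]
  linarith [card_rpow_le_card_edgeBoundary_add hd hA]

/-- Sobolev inequality for functions vanishing on half the box
(key step in the proof of Theorem 2.7). -/
theorem sobolev_vanishing_on_half_box
    (d : ℕ) (hd : 2 ≤ d) :
    ∃ C : ℝ, 0 ≤ C ∧ ∀ r : ℕ, 1 ≤ r → ∀ g : Zd d → ℝ,
      (∀ x ∈ box d r, 0 ≤ g x) →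
      (box d r).card ≤ 2 * ((box d r).filter fun x => g x = 0).card →
      boxLp d r ((d : ℝ) / ((d : ℝ) - 1)) g ≤ C * gradLp d r 1 g := by
  have hc : (2⁻¹ : ℝ) ^ (d : ℝ)⁻¹ < 1 :=
    Real.rpow_lt_one (by norm_num) (by norm_num) (by positivity)
  refine ⟨(1 - 2⁻¹ ^ (d : ℝ)⁻¹)⁻¹, inv_nonneg.2 (sub_nonneg.2 hc.le), fun r _ g hg hhalf => ?_⟩
  set S := (box d r).filter fun x => g x ≠ 0
  have hsplit : #((box d r).filter fun x => g x = 0) + #S = #(box d r) :=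
    Finset.card_filter_add_card_filter_not _
  have hiso : ∀ A ⊆ S, (#A : ℝ) ^ (1 / ((d : ℝ) / (d - 1))) ≤
      (1 - 2⁻¹ ^ (d : ℝ)⁻¹)⁻¹ * #(edgeBoundary (edgeBox d r) Prod.fst eplus A) := fun A hA => by
    rw [one_div_div]
    exact card_rpow_le_of_two_mul_card_le hd (hA.trans (Finset.filter_subset _ _))
      (by have := Finset.card_le_card hA; omega)
  have hp : (1 : ℝ) ≤ d / (d - 1) := by
    rw [le_div_iff₀ (sub_pos.2 (by norm_cast))]
    linarith
  simpa only [boxLp, gradLp, div_one, Real.rpow_one] using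
    rpow_sum_abs_rpow_le_of_isoperimetric (edgeBox d r) Prod.fst eplus hp
      (fun e he => mem_edgeBox.1 he) hiso hg fun x hx hgx => Finset.mem_filter.2 ⟨hx, hgx⟩

end AnchoredNash
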